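/- arXiv:2303.13795 — 2 statements merged into one kernel-verified Lean document; each statement's English description precedes it below -/
import Mathlib

section
/- Under the setup, suppose D₁ ≥ D₀ almost surely, for all d, z ∈ {0,1} the pair (Z, W) is conditionally independent of Y_{d,z} given (D₁, D₀), Z is conditionally independent of (D₁, D₀) given W, P(Z = z, W = w) > 0 for z ∈ {0,1}, P(NT) > 0, P(CP) > 0, and the never-taker average direct effect satisfies E[Y_{0,1} − Y_{0,0} | NT] = ρ₀. Then r₀(w) := E[Y·(1−D) | Z = 1, W = w] − E[Y·(1−D) | Z = 0, W = w] = ρ₀·P(NT | W = w) − E[Y_{0,0} | CP]·P(CP | W = w). -/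
/-!
On `{Z = 1}` the treatment is `D₁`, so by monotonicity `Y·(1 − D) = Y_{0,1}·1_NT`; on `{Z = 0}` it
is `D₀`, and `Y·(1 − D) = Y_{0,0}·(1_NT + 1_CP)`. For a stratum `G`, independence of `(Z, W)` and
`Y_{d,z}` given `G` factors `E[Y_{d,z}·1_G | Z = z, W = w]` as `E[Y_{d,z} | G]·P(G | Z = z, W = w)`,
and independence of `Z` and `(D₁, D₀)` given `W` turns `P(G | Z = z, W = w)` into `P(G | W = w)`.
The two never-taker terms then combine into `ρ₀·P(NT | W = w)`.
-/

open MeasureTheory ProbabilityTheory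

/-- `pr μ A` is the probability of the event `A`, as a real number. -/
noncomputable def pr {Ω : Type*} [MeasurableSpace Ω] (μ : Measure Ω) (A : Set Ω) : ℝ :=
  (μ A).toReal

/-- `prCond μ A B` is the conditional probability `P(A | B) = P(A ∩ B) / P(B)`. -/
noncomputable def prCond {Ω : Type*} [MeasurableSpace Ω] (μ : Measure Ω) (A B : Set Ω) : ℝ :=
  pr μ (A ∩ B) / pr μ B

/-- `cexp μ A f` is the conditional expectation `E[f | A]` of `f` given the event `A`. -/
noncomputable def cexp {Ω : Type*} [MeasurableSpace Ω] (μ : Measure Ω) (A : Set Ω)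
    (f : Ω → ℝ) : ℝ :=
  ∫ ω, f ω ∂(μ[|A])

/-- The event `{ω | f ω = c}`. -/
def evEq {Ω : Type*} (f : Ω → ℝ) (c : ℝ) : Set Ω := {ω | f ω = c}

/-- Always takers: `D₁ = D₀ = 1`. -/
def ATset {Ω : Type*} (D1 D0 : Ω → ℝ) : Set Ω := {ω | D1 ω = 1 ∧ D0 ω = 1}

/-- Never takers: `D₁ = D₀ = 0`. -/
def NTset {Ω : Type*} (D1 D0 : Ω → ℝ) : Set Ω := {ω | D1 ω = 0 ∧ D0 ω = 0}

/-- Compliers: `D₁ = 1`, `D₀ = 0`. -/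
def CPset {Ω : Type*} (D1 D0 : Ω → ℝ) : Set Ω := {ω | D1 ω = 1 ∧ D0 ω = 0}

section ConditionalMeasure

variable {Ω : Type*} [MeasurableSpace Ω] {μ : Measure Ω} {s t : Set Ω}

theorem MeasureTheory.Integrable.cond {E : Type*} [NormedAddCommGroup E] {f : Ω → E}
    (hf : Integrable f μ) (s : Set Ω) : Integrable f (μ[|s]) := by
  by_cases hs : μ s = 0
  · simp [cond_eq_zero_of_meas_eq_zero hs]
  · exact hf.restrict.smul_measure (ENNReal.inv_ne_top.2 hs)

theorem restrict_eq_measure_smul_cond [IsFiniteMeasure μ] (hs : MeasurableSet s) :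
    μ.restrict s = μ s • μ[|s] := by
  ext t ht
  rw [Measure.smul_apply, smul_eq_mul, mul_comm, cond_mul_eq_inter hs, Measure.restrict_apply ht,
    Set.inter_comm]

theorem setIntegral_eq_measureReal_mul_integral_cond [IsFiniteMeasure μ] (hs : MeasurableSet s)
    (f : Ω → ℝ) : ∫ ω in s, f ω ∂μ = μ.real s * ∫ ω, f ω ∂(μ[|s]) := by
  rw [restrict_eq_measure_smul_cond hs, integral_smul_measure, smul_eq_mul, measureReal_def]

theorem cond_inter_apply_eq_of_cond_indep [IsFiniteMeasure μ] {u : Set Ω} (hs : MeasurableSet s)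
    (hu : MeasurableSet u) (hsu : μ (s ∩ u) ≠ 0) (hind : μ[s ∩ t | u] = μ[s | u] * μ[t | u]) :
    μ[t | s ∩ u] = μ[t | u] := by
  have hne : μ[s | u] ≠ 0 := (cond_pos_of_inter_ne_zero hu (by rwa [Set.inter_comm])).ne'
  rw [Set.inter_comm, ← cond_cond_eq_cond_inter hu hs, cond_apply hs, hind, ← mul_assoc,
    ENNReal.inv_mul_cancel hne (measure_ne_top _ _), one_mul]

theorem cexp_eq_inv_mul_setIntegral (μ : Measure Ω) (s : Set Ω) (f : Ω → ℝ) :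
    cexp μ s f = (pr μ s)⁻¹ * ∫ ω in s, f ω ∂μ := by
  rw [cexp, ProbabilityTheory.cond, integral_smul_measure, ENNReal.toReal_inv, smul_eq_mul, pr]

theorem cexp_congr_ae (hs : MeasurableSet s) {f g : Ω → ℝ} (h : ∀ᵐ ω ∂μ, ω ∈ s → f ω = g ω) :
    cexp μ s f = cexp μ s g := by
  rw [cexp_eq_inv_mul_setIntegral, cexp_eq_inv_mul_setIntegral, setIntegral_congr_ae hs h]

theorem cexp_add {f g : Ω → ℝ} (hf : Integrable f μ) (hg : Integrable g μ) :
    cexp μ s (fun ω => f ω + g ω) = cexp μ s f + cexp μ s g :=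
  integral_add (hf.cond s) (hg.cond s)

theorem cexp_sub {f g : Ω → ℝ} (hf : Integrable f μ) (hg : Integrable g μ) :
    cexp μ s (fun ω => f ω - g ω) = cexp μ s f - cexp μ s g :=
  integral_sub (hf.cond s) (hg.cond s)

theorem prCond_eq_toReal_cond (hs : MeasurableSet s) (μ : Measure Ω) (t : Set Ω) :
    prCond μ t s = (μ[t | s]).toReal := by
  rw [cond_apply hs, ENNReal.toReal_mul, ENNReal.toReal_inv, prCond, Set.inter_comm,
    div_eq_inv_mul, pr, pr]

end ConditionalMeasure

section Independence

variable {Ω β : Type*} [MeasurableSpace Ω] [MeasurableSpace β] {μ : Measure Ω} [IsFiniteMeasure μ]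
  {X : Ω → β} {T : Set β} {t : Set Ω} {f : Ω → ℝ}

theorem setIntegral_inter_preimage_eq_of_indepFun (hX : Measurable X) (hT : MeasurableSet T)
    (ht : MeasurableSet t) (hf : Integrable f μ) (hXf : IndepFun X f (μ[|t])) :
    ∫ ω in t ∩ X ⁻¹' T, f ω ∂μ = μ.real (t ∩ X ⁻¹' T) * cexp μ t f := by
  have hprod : ∫ ω, (X ⁻¹' T).indicator f ω ∂(μ[|t]) = (μ[|t]).real (X ⁻¹' T) * cexp μ t f := by
    have := hXf.integral_fun_comp_mul_comp (f := T.indicator 1) (g := id) hX.aemeasurable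
      (hf.cond t).aemeasurable (aestronglyMeasurable_one.indicator hT)
      aestronglyMeasurable_id
    have hind : ∀ ω, T.indicator 1 (X ω) * f ω = (X ⁻¹' T).indicator f ω := fun ω => by
      by_cases h : X ω ∈ T <;> simp [h]
    simp only [hind, id] at this
    rw [this, cexp, ← integral_indicator_one (hX hT)]
    rfl
  have hmass : μ.real t * (μ[|t]).real (X ⁻¹' T) = μ.real (t ∩ X ⁻¹' T) := by
    simp only [measureReal_def, ← ENNReal.toReal_mul, mul_comm (μ t), cond_mul_eq_inter ht]
  rw [← setIntegral_indicator (hX hT), setIntegral_eq_measureReal_mul_integral_cond ht, hprod,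
    ← mul_assoc, hmass]

theorem cexp_indicator_eq_of_indepFun (hX : Measurable X) (hT : MeasurableSet T)
    (ht : MeasurableSet t) (hf : Integrable f μ) (hXf : IndepFun X f (μ[|t])) :
    cexp μ (X ⁻¹' T) (t.indicator f) = (μ[t | X ⁻¹' T]).toReal * cexp μ t f := by
  rw [cexp_eq_inv_mul_setIntegral, setIntegral_indicator ht, Set.inter_comm,
    setIntegral_inter_preimage_eq_of_indepFun hX hT ht hf hXf, cond_apply (hX hT),
    ENNReal.toReal_mul, ENNReal.toReal_inv, Set.inter_comm, pr, measureReal_def, mul_assoc]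

end Independence

section Model

variable {Ω : Type*} {D1 D0 Z W : Ω → ℝ}

theorem evEq_inter_evEq (Z W : Ω → ℝ) (z w : ℝ) :
    evEq Z z ∩ evEq W w = (fun ω => (Z ω, W ω)) ⁻¹' {(z, w)} := by
  ext ω
  simp [evEq]

theorem cexp_indicator_stratum_eq [MeasurableSpace Ω] {μ : Measure Ω} [IsFiniteMeasure μ]
    {f : Ω → ℝ} {i j z w : ℝ}
    (hD1 : Measurable D1) (hD0 : Measurable D0) (hZ : Measurable Z) (hW : Measurable W)
    (hf : Integrable f μ) (hzw : μ (evEq Z z ∩ evEq W w) ≠ 0)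
    (hfCI : IndepFun (fun ω => (Z ω, W ω)) f (μ[|{ω | D1 ω = i ∧ D0 ω = j}]))
    (hZCI : IndepFun Z (fun ω => (D1 ω, D0 ω)) (μ[|evEq W w])) :
    cexp μ (evEq Z z ∩ evEq W w) ({ω | D1 ω = i ∧ D0 ω = j}.indicator f)
      = cexp μ {ω | D1 ω = i ∧ D0 ω = j} f
        * prCond μ {ω | D1 ω = i ∧ D0 ω = j} (evEq W w) := by
  have hstratum : {ω | D1 ω = i ∧ D0 ω = j} = (fun ω => (D1 ω, D0 ω)) ⁻¹' {(i, j)} := by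
    ext ω
    simp
  have hW' : MeasurableSet (evEq W w) := hW (measurableSet_singleton w)
  have hcond : μ[{ω | D1 ω = i ∧ D0 ω = j} | evEq Z z ∩ evEq W w]
      = μ[{ω | D1 ω = i ∧ D0 ω = j} | evEq W w] := by
    refine cond_inter_apply_eq_of_cond_indep (hZ (measurableSet_singleton z)) hW' hzw ?_
    rw [hstratum]
    exact hZCI.measure_inter_preimage_eq_mul _ _ (measurableSet_singleton z)
      (measurableSet_singleton _)
  rw [prCond_eq_toReal_cond hW', ← hcond, evEq_inter_evEq, mul_comm]
  exact cexp_indicator_eq_of_indepFun (hZ.prodMk hW) (measurableSet_singleton _)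
    (hstratum ▸ (hD1.prodMk hD0) (measurableSet_singleton _)) hf hfCI

variable {Y : Fin 2 → Fin 2 → Ω → ℝ} {D Yo : Ω → ℝ} {ω : Ω}

theorem observed_untreated_of_instrument_one (hD1 : D1 ω = 0 ∨ D1 ω = 1)
    (hD0 : D0 ω = 0 ∨ D0 ω = 1) (hmono : D0 ω ≤ D1 ω)
    (hD : D ω = D1 ω * Z ω + D0 ω * (1 - Z ω))
    (hYo : Yo ω = (Y 1 1 ω * Z ω + Y 1 0 ω * (1 - Z ω)) * D ω
      + (Y 0 1 ω * Z ω + Y 0 0 ω * (1 - Z ω)) * (1 - D ω))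
    (hZ : Z ω = 1) :
    Yo ω * (1 - D ω) = (NTset D1 D0).indicator (Y 0 1) ω := by
  rcases hD1 with h1 | h1 <;> rcases hD0 with h0 | h0
  case inl.inr => linarith
  all_goals simp [NTset, Set.indicator, hYo, hD, hZ, h1, h0]

theorem observed_untreated_of_instrument_zero (hD1 : D1 ω = 0 ∨ D1 ω = 1)
    (hD0 : D0 ω = 0 ∨ D0 ω = 1) (hD : D ω = D1 ω * Z ω + D0 ω * (1 - Z ω))
    (hYo : Yo ω = (Y 1 1 ω * Z ω + Y 1 0 ω * (1 - Z ω)) * D ω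
      + (Y 0 1 ω * Z ω + Y 0 0 ω * (1 - Z ω)) * (1 - D ω))
    (hZ : Z ω = 0) :
    Yo ω * (1 - D ω) = (NTset D1 D0).indicator (Y 0 0) ω + (CPset D1 D0).indicator (Y 0 0) ω := by
  rcases hD1 with h1 | h1 <;> rcases hD0 with h0 | h0 <;>
    simp [NTset, CPset, Set.indicator, hYo, hD, hZ, h1, h0]

end Model

theorem r0_decomposition_general
    {Ω : Type*} [MeasurableSpace Ω] (μ : Measure Ω) [IsProbabilityMeasure μ]
    (Y : Fin 2 → Fin 2 → Ω → ℝ) (D1 D0 Z W : Ω → ℝ)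
    (hYint : ∀ d z, Integrable (Y d z) μ)
    (hD1v : ∀ ω, D1 ω = 0 ∨ D1 ω = 1) (hD0v : ∀ ω, D0 ω = 0 ∨ D0 ω = 1)
    (hD1m : Measurable D1) (hD0m : Measurable D0) (hZm : Measurable Z) (hWm : Measurable W)
    (D : Ω → ℝ) (hD : ∀ ω, D ω = D1 ω * Z ω + D0 ω * (1 - Z ω))
    (Yo : Ω → ℝ)
    (hYo : ∀ ω, Yo ω = (Y 1 1 ω * Z ω + Y 1 0 ω * (1 - Z ω)) * D ω
      + (Y 0 1 ω * Z ω + Y 0 0 ω * (1 - Z ω)) * (1 - D ω))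
    (hmono : ∀ᵐ ω ∂μ, D0 ω ≤ D1 ω)
    (hCI1 : ∀ (d z : Fin 2) (i j : ℝ),
      IndepFun (fun ω => (Z ω, W ω)) (Y d z) (μ[|{ω | D1 ω = i ∧ D0 ω = j}]))
    (hCI2 : ∀ w' : ℝ, IndepFun Z (fun ω => (D1 ω, D0 ω)) (μ[|evEq W w']))
    (w : ℝ)
    (hpos : ∀ z : ℝ, z = 0 ∨ z = 1 → 0 < pr μ (evEq Z z ∩ evEq W w))
    (ρ0 : ℝ) (hρ0 : cexp μ (NTset D1 D0) (fun ω => Y 0 1 ω - Y 0 0 ω) = ρ0) :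
    cexp μ (evEq Z 1 ∩ evEq W w) (fun ω => Yo ω * (1 - D ω))
      - cexp μ (evEq Z 0 ∩ evEq W w) (fun ω => Yo ω * (1 - D ω))
      = ρ0 * prCond μ (NTset D1 D0) (evEq W w)
        - cexp μ (CPset D1 D0) (fun ω => Y 0 0 ω) * prCond μ (CPset D1 D0) (evEq W w) := by
  have hcell (z : ℝ) : MeasurableSet (evEq Z z ∩ evEq W w) :=
    (hZm (measurableSet_singleton z)).inter (hWm (measurableSet_singleton w))
  have hcell_ne (z : ℝ) (hz : z = 0 ∨ z = 1) : μ (evEq Z z ∩ evEq W w) ≠ 0 :=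
    fun h => (hpos z hz).ne' (by simp [pr, h])
  have hNT : MeasurableSet (NTset D1 D0) :=
    (hD1m (measurableSet_singleton 0)).inter (hD0m (measurableSet_singleton 0))
  have hCP : MeasurableSet (CPset D1 D0) :=
    (hD1m (measurableSet_singleton 1)).inter (hD0m (measurableSet_singleton 0))
  have hZ1 : cexp μ (evEq Z 1 ∩ evEq W w) (fun ω => Yo ω * (1 - D ω))
      = cexp μ (evEq Z 1 ∩ evEq W w) ((NTset D1 D0).indicator (Y 0 1)) :=
    cexp_congr_ae (hcell 1) <| by
      filter_upwards [hmono] with ω hω hmem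
      exact observed_untreated_of_instrument_one (hD1v ω) (hD0v ω) hω (hD ω) (hYo ω) hmem.1
  have hZ0 : cexp μ (evEq Z 0 ∩ evEq W w) (fun ω => Yo ω * (1 - D ω))
      = cexp μ (evEq Z 0 ∩ evEq W w) ((NTset D1 D0).indicator (Y 0 0))
        + cexp μ (evEq Z 0 ∩ evEq W w) ((CPset D1 D0).indicator (Y 0 0)) := by
    rw [cexp_congr_ae (hcell 0) (.of_forall fun ω hmem =>
      observed_untreated_of_instrument_zero (hD1v ω) (hD0v ω) (hD ω) (hYo ω) hmem.1)]
    exact cexp_add ((hYint 0 0).indicator hNT) ((hYint 0 0).indicator hCP)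
  have hstratum (z : ℝ) (hz : z = 0 ∨ z = 1) (i j : ℝ) (d z' : Fin 2) :=
    cexp_indicator_stratum_eq hD1m hD0m hZm hWm (hYint d z') (hcell_ne z hz) (hCI1 d z' i j)
      (hCI2 w)
  subst hρ0
  rw [hZ1, hZ0, cexp_sub (hYint 0 1) (hYint 0 0)]
  unfold NTset CPset
  rw [hstratum 1 (.inr rfl) 0 0 0 1, hstratum 0 (.inl rfl) 0 0 0 0,
    hstratum 0 (.inl rfl) 1 0 0 0]
  ring

/-- the contrast `r₀(w)` decomposes into direct and complier terms. -/
theorem r0_decomposition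
    {Ω : Type*} [MeasurableSpace Ω] (μ : Measure Ω) [IsProbabilityMeasure μ]
    (Y : Fin 2 → Fin 2 → Ω → ℝ) (D1 D0 Z W : Ω → ℝ)
    (hYint : ∀ d z, Integrable (Y d z) μ) (hYmeas : ∀ d z, Measurable (Y d z))
    (hD1v : ∀ ω, D1 ω = 0 ∨ D1 ω = 1) (hD0v : ∀ ω, D0 ω = 0 ∨ D0 ω = 1)
    (hZv : ∀ ω, Z ω = 0 ∨ Z ω = 1) (hWv : ∀ ω, W ω = 0 ∨ W ω = 1)
    (hD1m : Measurable D1) (hD0m : Measurable D0) (hZm : Measurable Z) (hWm : Measurable W)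
    (D : Ω → ℝ) (hD : ∀ ω, D ω = D1 ω * Z ω + D0 ω * (1 - Z ω))
    (Yo : Ω → ℝ)
    (hYo : ∀ ω, Yo ω = (Y 1 1 ω * Z ω + Y 1 0 ω * (1 - Z ω)) * D ω
      + (Y 0 1 ω * Z ω + Y 0 0 ω * (1 - Z ω)) * (1 - D ω))
    (hmono : ∀ᵐ ω ∂μ, D0 ω ≤ D1 ω)
    (hCI1 : ∀ (d z : Fin 2) (i j : ℝ),
      IndepFun (fun ω => (Z ω, W ω)) (Y d z) (μ[|{ω | D1 ω = i ∧ D0 ω = j}]))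
    (hCI2 : ∀ w' : ℝ, IndepFun Z (fun ω => (D1 ω, D0 ω)) (μ[|evEq W w']))
    (w : ℝ) (hw : w = 0 ∨ w = 1)
    (hpos : ∀ z : ℝ, z = 0 ∨ z = 1 → 0 < pr μ (evEq Z z ∩ evEq W w))
    (hNT : 0 < pr μ (NTset D1 D0)) (hCP : 0 < pr μ (CPset D1 D0))
    (ρ0 : ℝ) (hρ0 : cexp μ (NTset D1 D0) (fun ω => Y 0 1 ω - Y 0 0 ω) = ρ0) :
    cexp μ (evEq Z 1 ∩ evEq W w) (fun ω => Yo ω * (1 - D ω))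
      - cexp μ (evEq Z 0 ∩ evEq W w) (fun ω => Yo ω * (1 - D ω))
      = ρ0 * prCond μ (NTset D1 D0) (evEq W w)
        - cexp μ (CPset D1 D0) (fun ω => Y 0 0 ω) * prCond μ (CPset D1 D0) (evEq W w) :=
  r0_decomposition_general μ Y D1 D0 Z W hYint hD1v hD0v hD1m hD0m hZm hWm D hD Yo hYo hmono hCI1
    hCI2 w hpos ρ0 hρ0
end

section
/- (Imbens–Angrist identification with a valid instrument.) Let (Ω, 𝔉, P) be a probability space, Y₁, Y₀ : Ω → ℝ integrable potential outcomes, D₁, D₀ : Ω → {0,1} potential treatments, and Z : Ω → {0,1} a binary instrument. Let D = D₁·Z + D₀·(1−Z) and Y = Y₁·D + Y₀·(1−D). Assume: (exclusion is built in since Y₁, Y₀ do not depend on Z); monotonicity D₁ ≥ D₀ almost surely; independence of Z from (Y₁, Y₀, D₁, D₀); relevance P(D₁ > D₀) > 0; and 0 < P(Z = 1) < 1. Then E[Y₁ − Y₀ | D₁ > D₀] = (E[Y | Z = 1] − E[Y | Z = 0]) / (E[D | Z = 1] − E[D | Z = 0]). -/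
open MeasureTheory ProbabilityTheory

/-! On the event `{Z = z}` the observed treatment is `D_z` and the observed outcome is
`Y₀ + (Y₁ - Y₀) D_z`, both functions of `(Y₁, Y₀, D₁, D₀)`. Independence of `Z` from these turns
each conditional mean given `Z = z` into an unconditional mean, so the Wald ratio becomes
`E[(Y₁ - Y₀)(D₁ - D₀)] / E[D₁ - D₀]`. Under monotonicity `D₁ - D₀` is the indicator of the
compliers, and this ratio is `E[Y₁ - Y₀ | D₁ > D₀]`. -/

section

variable {Ω : Type*} [MeasurableSpace Ω] {μ : Measure Ω}

lemma cexp_eq_setIntegral_div (A : Set Ω) (f : Ω → ℝ) :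
    cexp μ A f = (∫ ω in A, f ω ∂μ) / pr μ A := by
  rw [cexp, ProbabilityTheory.cond, integral_smul_measure, ENNReal.toReal_inv, smul_eq_mul,
    div_eq_inv_mul, pr]

lemma cexp_congr {A : Set Ω} (hA : MeasurableSet A) {f g : Ω → ℝ} (hfg : ∀ ω ∈ A, f ω = g ω) :
    cexp μ A f = cexp μ A g :=
  integral_congr_ae ((ae_cond_mem hA).mono hfg)

lemma cexp_eq_integral_of_indepFun {α β : Type*} [MeasurableSpace α] [MeasurableSpace β]
    {Z : Ω → α} {W : Ω → β} (hZW : IndepFun Z W μ) (hZ : Measurable Z) (hW : AEMeasurable W μ)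
    {S : Set α} (hS : MeasurableSet S) (hpos : pr μ (Z ⁻¹' S) ≠ 0) {g : β → ℝ}
    (hg : AEStronglyMeasurable g (μ.map W)) {f : Ω → ℝ} (hfg : ∀ ω ∈ Z ⁻¹' S, f ω = g (W ω)) :
    cexp μ (Z ⁻¹' S) f = ∫ ω, g (W ω) ∂μ := by
  rw [cexp_congr (hZ hS) hfg, cexp_eq_setIntegral_div,
    Indep.setIntegral_eq_mul hZ.comap_le hZW hW ⟨S, hS, rfl⟩ hg]
  exact mul_div_cancel_left₀ _ hpos

lemma pr_evEq_zero_eq_one_sub [IsProbabilityMeasure μ] {Z : Ω → ℝ} (hZ : Measurable Z)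
    (hZv : ∀ ω, Z ω = 0 ∨ Z ω = 1) : pr μ (evEq Z 0) = 1 - pr μ (evEq Z 1) := by
  have hcompl : evEq Z 0 = (evEq Z 1)ᶜ := by
    ext ω
    rcases hZv ω with h | h <;> simp [evEq, h]
  rw [hcompl, pr, ← measureReal_def,
    probReal_compl_eq_one_sub (s := evEq Z 1) (hZ (measurableSet_singleton 1))]
  rfl

lemma integral_mul_sub_eq_setIntegral_lt {D1 D0 : Ω → ℝ}
    (hD1 : ∀ᵐ ω ∂μ, D1 ω = 0 ∨ D1 ω = 1) (hD0 : ∀ᵐ ω ∂μ, D0 ω = 0 ∨ D0 ω = 1)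
    (hmono : ∀ᵐ ω ∂μ, D0 ω ≤ D1 ω) (hC : MeasurableSet {ω | D0 ω < D1 ω}) (f : Ω → ℝ) :
    ∫ ω, f ω * (D1 ω - D0 ω) ∂μ = ∫ ω in {ω | D0 ω < D1 ω}, f ω ∂μ := by
  rw [← integral_indicator hC]
  refine integral_congr_ae ?_
  filter_upwards [hD1, hD0, hmono] with ω h1 h0 hle
  simp only [Set.indicator_apply, Set.mem_ofPred_eq]
  split_ifs <;> grind

lemma cexp_setOf_lt_eq_div [IsFiniteMeasure μ] {Y1 Y0 D1 D0 : Ω → ℝ}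
    (hY1 : Integrable Y1 μ) (hY0 : Integrable Y0 μ) (hD1m : Measurable D1) (hD0m : Measurable D0)
    (hD1 : ∀ᵐ ω ∂μ, D1 ω = 0 ∨ D1 ω = 1) (hD0 : ∀ᵐ ω ∂μ, D0 ω = 0 ∨ D0 ω = 1)
    (hmono : ∀ᵐ ω ∂μ, D0 ω ≤ D1 ω) :
    cexp μ {ω | D0 ω < D1 ω} (fun ω => Y1 ω - Y0 ω)
      = ((∫ ω, Y0 ω + (Y1 ω - Y0 ω) * D1 ω ∂μ) - ∫ ω, Y0 ω + (Y1 ω - Y0 ω) * D0 ω ∂μ)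
        / ((∫ ω, D1 ω ∂μ) - ∫ ω, D0 ω ∂μ) := by
  have hbdd : ∀ d : Ω → ℝ, (∀ᵐ ω ∂μ, d ω = 0 ∨ d ω = 1) → ∀ᵐ ω ∂μ, ‖d ω‖ ≤ 1 :=
    fun d hd => hd.mono fun ω h => by rcases h with h | h <;> simp [h]
  have hYint : ∀ d : Ω → ℝ, Measurable d → (∀ᵐ ω ∂μ, d ω = 0 ∨ d ω = 1) →
      Integrable (fun ω => Y0 ω + (Y1 ω - Y0 ω) * d ω) μ :=
    fun d hdm hd => hY0.add ((hY1.sub hY0).mul_bdd hdm.aestronglyMeasurable (hbdd d hd))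
  have hnum : (∫ ω, Y0 ω + (Y1 ω - Y0 ω) * D1 ω ∂μ) - ∫ ω, Y0 ω + (Y1 ω - Y0 ω) * D0 ω ∂μ
      = ∫ ω, (Y1 ω - Y0 ω) * (D1 ω - D0 ω) ∂μ := by
    rw [← integral_sub (hYint D1 hD1m hD1) (hYint D0 hD0m hD0)]
    congr with ω
    ring
  have hden : (∫ ω, D1 ω ∂μ) - ∫ ω, D0 ω ∂μ = ∫ ω, 1 * (D1 ω - D0 ω) ∂μ := by
    simp only [one_mul, integral_sub (.of_bound hD1m.aestronglyMeasurable 1 (hbdd D1 hD1))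
      (.of_bound hD0m.aestronglyMeasurable 1 (hbdd D0 hD0))]
  have hcompliers :=
    integral_mul_sub_eq_setIntegral_lt hD1 hD0 hmono (measurableSet_lt hD0m hD1m)
  rw [hnum, hden, hcompliers, hcompliers, setIntegral_const, smul_eq_mul, mul_one,
    cexp_eq_setIntegral_div]
  rfl

end

theorem imbens_angrist_late_identification_general
    {Ω : Type*} [MeasurableSpace Ω] (μ : Measure Ω) [IsProbabilityMeasure μ]
    (Y1 Y0 D1 D0 Z : Ω → ℝ)
    (hY1int : Integrable Y1 μ) (hY0int : Integrable Y0 μ)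
    (hD1v : ∀ ω, D1 ω = 0 ∨ D1 ω = 1) (hD0v : ∀ ω, D0 ω = 0 ∨ D0 ω = 1)
    (hZv : ∀ ω, Z ω = 0 ∨ Z ω = 1)
    (hD1m : Measurable D1) (hD0m : Measurable D0) (hZm : Measurable Z)
    (D : Ω → ℝ) (hD : ∀ ω, D ω = D1 ω * Z ω + D0 ω * (1 - Z ω))
    (Yo : Ω → ℝ) (hYo : ∀ ω, Yo ω = Y1 ω * D ω + Y0 ω * (1 - D ω))
    (hmono : ∀ᵐ ω ∂μ, D0 ω ≤ D1 ω)
    (hindep : IndepFun Z (fun ω => (Y1 ω, Y0 ω, D1 ω, D0 ω)) μ)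
    (hZpos : 0 < pr μ (evEq Z 1)) (hZlt : pr μ (evEq Z 1) < 1) :
    cexp μ {ω | D0 ω < D1 ω} (fun ω => Y1 ω - Y0 ω)
      = (cexp μ (evEq Z 1) Yo - cexp μ (evEq Z 0) Yo)
        / (cexp μ (evEq Z 1) D - cexp μ (evEq Z 0) D) := by
  have hW : AEMeasurable (fun ω => (Y1 ω, Y0 ω, D1 ω, D0 ω)) μ :=
    hY1int.aemeasurable.prodMk (hY0int.aemeasurable.prodMk
      (hD1m.aemeasurable.prodMk hD0m.aemeasurable))
  have hZ0 : pr μ (evEq Z 0) ≠ 0 := by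
    rw [pr_evEq_zero_eq_one_sub hZm hZv]
    exact (sub_pos.2 hZlt).ne'
  have hIV : ∀ (z : ℝ) (g : ℝ × ℝ × ℝ × ℝ → ℝ), pr μ (evEq Z z) ≠ 0 → Measurable g →
      ∀ f : Ω → ℝ, (∀ ω, Z ω = z → f ω = g (Y1 ω, Y0 ω, D1 ω, D0 ω)) →
      cexp μ (evEq Z z) f = ∫ ω, g (Y1 ω, Y0 ω, D1 ω, D0 ω) ∂μ :=
    fun z _ hz hg _ hf => cexp_eq_integral_of_indepFun hindep hZm hW (measurableSet_singleton z)
      hz hg.aestronglyMeasurable hf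
  rw [cexp_setOf_lt_eq_div hY1int hY0int hD1m hD0m (ae_of_all μ hD1v) (ae_of_all μ hD0v) hmono,
    hIV 1 (fun p => p.2.1 + (p.1 - p.2.1) * p.2.2.1) hZpos.ne' (by fun_prop) Yo
      fun ω hω => by simp only [hYo, hD, hω]; ring,
    hIV 0 (fun p => p.2.1 + (p.1 - p.2.1) * p.2.2.2) hZ0 (by fun_prop) Yo
      fun ω hω => by simp only [hYo, hD, hω]; ring,
    hIV 1 (fun p => p.2.2.1) hZpos.ne' (by fun_prop) D fun ω hω => by simp only [hD, hω]; ring,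
    hIV 0 (fun p => p.2.2.2) hZ0 (by fun_prop) D fun ω hω => by simp only [hD, hω]; ring]

/-- Imbens–Angrist: with a valid instrument, the LATE equals
the Wald (IV) estimand. -/
theorem imbens_angrist_late_identification
    {Ω : Type*} [MeasurableSpace Ω] (μ : Measure Ω) [IsProbabilityMeasure μ]
    (Y1 Y0 D1 D0 Z : Ω → ℝ)
    (hY1int : Integrable Y1 μ) (hY0int : Integrable Y0 μ)
    (hY1m : Measurable Y1) (hY0m : Measurable Y0)
    (hD1v : ∀ ω, D1 ω = 0 ∨ D1 ω = 1) (hD0v : ∀ ω, D0 ω = 0 ∨ D0 ω = 1)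
    (hZv : ∀ ω, Z ω = 0 ∨ Z ω = 1)
    (hD1m : Measurable D1) (hD0m : Measurable D0) (hZm : Measurable Z)
    (D : Ω → ℝ) (hD : ∀ ω, D ω = D1 ω * Z ω + D0 ω * (1 - Z ω))
    (Yo : Ω → ℝ) (hYo : ∀ ω, Yo ω = Y1 ω * D ω + Y0 ω * (1 - D ω))
    (hmono : ∀ᵐ ω ∂μ, D0 ω ≤ D1 ω)
    (hindep : IndepFun Z (fun ω => (Y1 ω, Y0 ω, D1 ω, D0 ω)) μ)
    (hrel : 0 < pr μ {ω | D0 ω < D1 ω})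
    (hZpos : 0 < pr μ (evEq Z 1)) (hZlt : pr μ (evEq Z 1) < 1) :
    cexp μ {ω | D0 ω < D1 ω} (fun ω => Y1 ω - Y0 ω)
      = (cexp μ (evEq Z 1) Yo - cexp μ (evEq Z 0) Yo)
        / (cexp μ (evEq Z 1) D - cexp μ (evEq Z 0) D) :=
  imbens_angrist_late_identification_general μ Y1 Y0 D1 D0 Z hY1int hY0int hD1v hD0v hZv hD1m hD0m
    hZm D hD Yo hYo hmono hindep hZpos hZlt
end
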